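/- If the intersection ⋂_{i=1}^{n} L[M_i] is nonempty, then Syn(𝒜) = I ∪ I_3 ∪ I_4, where I_3 = { w z : w ∈ ⋂_{i=1}^{n} L[M_i] and δ_i(Q_i,w) ⊆ F_i for all i } and I_4 = { u x w z : u ∈ (Σ∪{x})*, w ∈ ⋂_{i=1}^{n} L[M_i] }. -/

import Mathlib

/-- The transition function of a DFA extended to words (read left to right). -/
def deltaStar {Q A : Type} (δ : Q → A → Q) (q : Q) (w : List A) : Q :=
  w.foldl δ q

/-- `w` is a reset word for the DFA with transition function `δ`. -/
def IsReset {Q A : Type} (δ : Q → A → Q) (w : List A) : Prop :=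
  ∀ q q' : Q, deltaStar δ q w = deltaStar δ q' w

/-- The set of reset words of a DFA. -/
def Syn {Q A : Type} (δ : Q → A → Q) : Set (List A) :=
  {w | IsReset δ w}

/-- The alphabet Δ = Σ ∪ {x,y,z}: `Sum.inl a` is a letter of Σ, and
`Sum.inr 0`, `Sum.inr 1`, `Sum.inr 2` are the new letters x, y, z. -/
abbrev Alph (σ : Type) : Type := σ ⊕ Fin 3

def xL {σ : Type} : Alph σ := Sum.inr 0
def yL {σ : Type} : Alph σ := Sum.inr 1
def zL {σ : Type} : Alph σ := Sum.inr 2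

/-- The state set Q of the DFA 𝒜: the disjoint union of the state sets `Qst i`
of the DFAs `M i`, together with two new states: `Sum.inr false` is the sink `s`
and `Sum.inr true` is the state `h`. -/
abbrev StA {n : ℕ} (Qst : Fin n → Type) : Type := (Σ i, Qst i) ⊕ Bool

def sA {n : ℕ} {Qst : Fin n → Type} : StA Qst := Sum.inr false
def hA {n : ℕ} {Qst : Fin n → Type} : StA Qst := Sum.inr true

/-- The transition function φ of the DFA 𝒜. -/
def phi {n : ℕ} {σ : Type} {Qst : Fin n → Type}
    (δi : ∀ i, Qst i → σ → Qst i) (qinit : ∀ i, Qst i)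
    (Fi : ∀ i, Set (Qst i)) [∀ i, DecidablePred (· ∈ Fi i)] :
    StA Qst → Alph σ → StA Qst
  | Sum.inl ⟨i, q⟩, Sum.inl a => Sum.inl ⟨i, δi i q a⟩
  | Sum.inl ⟨i, q⟩, Sum.inr k =>
      if k = 0 then Sum.inl ⟨i, qinit i⟩          -- φ(q, x) = qᵢ
      else if k = 1 then sA                        -- φ(q, y) = s
      else if q ∈ Fi i then sA else hA             -- φ(q, z) = s on Fᵢ, h off Fᵢ
  | Sum.inr _, _ => sA                             -- φ(s,·) = φ(h,·) = s

/-- The language accepted by the DFA `M i = ⟨Qst i, σ, δi i, qinit i, Fi i⟩`. -/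
def LM {n : ℕ} {σ : Type} {Qst : Fin n → Type}
    (δi : ∀ i, Qst i → σ → Qst i) (qinit : ∀ i, Qst i)
    (Fi : ∀ i, Set (Qst i)) (i : Fin n) : Set (List σ) :=
  {w | deltaStar (δi i) (qinit i) w ∈ Fi i}

/-- `w ∈ (Σ ∪ {x})*`, i.e. `w` contains no occurrence of the letters y and z. -/
def noYZ {σ : Type} (w : List (Alph σ)) : Prop := yL ∉ w ∧ zL ∉ w

/-- L₁ = (Σ∪{x})* y Δ* -/
def L1 {σ : Type} : Set (List (Alph σ)) :=
  {w | ∃ u v, noYZ u ∧ w = u ++ yL :: v}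

/-- L₂ = (Σ∪{x})* z Δ⁺ -/
def L2 {σ : Type} : Set (List (Alph σ)) :=
  {w | ∃ u v, noYZ u ∧ v ≠ [] ∧ w = u ++ zL :: v}

/-- The ideal language I = L₁ ∪ L₂. -/
def ISet {σ : Type} : Set (List (Alph σ)) := L1 ∪ L2


/-!
Since `s` is a sink, a word is a reset word of `𝒜` iff it sends every state to `s`. A word over
`Σ ∪ {x}` keeps every state inside its component, where `x` acts as a jump to `qᵢ`, so it is never
a reset word as soon as there is a component. Otherwise look at the first `y` or `z`: after a `y`
every state is at `s`; after a `z` every state is at `s` or `h`, and any further letter takes `h`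
to `s`. What remains are the words `u z` with `u ∈ (Σ ∪ {x})*`; such a word is a reset word iff
`u` sends every state of every `Mᵢ` into `Fᵢ`. If `u` contains no `x` this says `δᵢ(Qᵢ, u) ⊆ Fᵢ`
(the set `I₃`); otherwise, after the last `x` all components restart at their `qᵢ`, and the
condition says that the rest of `u` lies in `⋂ L[Mᵢ]` (the set `I₄`).
-/

section DFA
variable {Q A : Type} (δ : Q → A → Q)

@[simp] lemma deltaStar_cons (q : Q) (a : A) (w : List A) :
    deltaStar δ q (a :: w) = deltaStar δ (δ q a) w := rfl

@[simp] lemma deltaStar_append (q : Q) (u v : List A) :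
    deltaStar δ q (u ++ v) = deltaStar δ (deltaStar δ q u) v :=
  List.foldl_append ..

lemma deltaStar_of_isSink {s : Q} (hs : ∀ a, δ s a = s) (w : List A) : deltaStar δ s w = s := by
  induction w with
  | nil => rfl
  | cons a w ih => rw [deltaStar_cons, hs, ih]

lemma mem_syn_iff_of_isSink {s : Q} (hs : ∀ a, δ s a = s) {w : List A} :
    w ∈ Syn δ ↔ ∀ q, deltaStar δ q w = s :=
  ⟨fun hw q => (hw q s).trans (deltaStar_of_isSink δ hs w),
    fun h q q' => (h q).trans (h q').symm⟩

end DFA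

section Words
variable {σ : Type}

lemma noYZ_nil : noYZ ([] : List (Alph σ)) := ⟨List.not_mem_nil, List.not_mem_nil⟩

lemma noYZ_cons {c : Alph σ} {u : List (Alph σ)} :
    noYZ (c :: u) ↔ (c ≠ yL ∧ c ≠ zL) ∧ noYZ u := by
  simp only [noYZ, List.mem_cons, not_or]
  tauto

lemma noYZ_append {u v : List (Alph σ)} : noYZ (u ++ v) ↔ noYZ u ∧ noYZ v := by
  simp only [noYZ, List.mem_append, not_or]
  tauto

lemma noYZ_map_inl (w : List σ) : noYZ (w.map Sum.inl : List (Alph σ)) := by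
  simp [noYZ, yL, zL]

lemma noYZ_or_exists_eq_append_yL_or_zL (w : List (Alph σ)) :
    noYZ w ∨ ∃ u c v, noYZ u ∧ (c = yL ∨ c = zL) ∧ w = u ++ c :: v := by
  induction w with
  | nil => exact Or.inl noYZ_nil
  | cons a w ih =>
    by_cases ha : a = yL ∨ a = zL
    · exact Or.inr ⟨[], a, w, noYZ_nil, ha, rfl⟩
    · rw [not_or] at ha
      rcases ih with hw | ⟨u, c, v, hu, hc, rfl⟩
      · exact Or.inl (noYZ_cons.2 ⟨ha, hw⟩)
      · exact Or.inr ⟨a :: u, c, v, noYZ_cons.2 ⟨ha, hu⟩, hc, rfl⟩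

lemma eq_map_inl_or_exists_eq_append_xL {u : List (Alph σ)} (hu : noYZ u) :
    (∃ w : List σ, u = w.map Sum.inl) ∨
      ∃ (u₁ : List (Alph σ)) (w : List σ), noYZ u₁ ∧ u = u₁ ++ xL :: w.map Sum.inl := by
  induction u with
  | nil => exact Or.inl ⟨[], rfl⟩
  | cons c u ih =>
    obtain ⟨⟨hy, hz⟩, hu⟩ := noYZ_cons.1 hu
    rcases ih hu with ⟨w, rfl⟩ | ⟨u₁, w, hu₁, rfl⟩
    · rcases c with a | k
      · exact Or.inl ⟨a :: w, rfl⟩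
      · fin_cases k
        · exact Or.inr ⟨[], w, noYZ_nil, rfl⟩
        · exact absurd rfl hy
        · exact absurd rfl hz
    · exact Or.inr ⟨c :: u₁, w, noYZ_cons.2 ⟨⟨hy, hz⟩, hu₁⟩, rfl⟩

end Words

section Automaton
variable {n : ℕ} {σ : Type} {Qst : Fin n → Type}
  (δi : ∀ i, Qst i → σ → Qst i) (qinit : ∀ i, Qst i) (Fi : ∀ i, Set (Qst i))

/-- `x` jumps to `qᵢ`. The letters `y` and `z`, which leave the component in `𝒜`, are sent to `qᵢ`
too; runs of `extStep` are only taken over words without them. -/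
def extStep (i : Fin n) (q : Qst i) : Alph σ → Qst i
  | Sum.inl a => δi i q a
  | Sum.inr _ => qinit i

lemma deltaStar_extStep_map_inl (i : Fin n) (w : List σ) (q : Qst i) :
    deltaStar (extStep δi qinit i) q (w.map Sum.inl) = deltaStar (δi i) q w := by
  induction w generalizing q with
  | nil => rfl
  | cons a w ih => exact ih _

lemma deltaStar_extStep_append_xL (i : Fin n) (u v : List (Alph σ)) (q : Qst i) :
    deltaStar (extStep δi qinit i) q (u ++ xL :: v) =
      deltaStar (extStep δi qinit i) (qinit i) v := by
  rw [deltaStar_append, deltaStar_cons]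
  rfl

def I3Set : Set (List (Alph σ)) :=
  {w | ∃ w' : List σ, (∀ i, w' ∈ LM δi qinit Fi i) ∧
    (∀ i (q : Qst i), deltaStar (δi i) q w' ∈ Fi i) ∧ w = w'.map Sum.inl ++ [zL]}

def I4Set : Set (List (Alph σ)) :=
  {w | ∃ (u : List (Alph σ)) (w' : List σ), noYZ u ∧ (∀ i, w' ∈ LM δi qinit Fi i) ∧
    w = u ++ xL :: (w'.map Sum.inl ++ [zL])}

lemma append_zL_mem_I3Set_union_I4Set {u : List (Alph σ)} (hu : noYZ u)
    (hF : ∀ i q, deltaStar (extStep δi qinit i) q u ∈ Fi i) :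
    u ++ [zL] ∈ I3Set δi qinit Fi ∪ I4Set δi qinit Fi := by
  rcases eq_map_inl_or_exists_eq_append_xL hu with ⟨w, rfl⟩ | ⟨u₁, w, hu₁, rfl⟩
  · simp only [deltaStar_extStep_map_inl] at hF
    exact Or.inl ⟨w, fun i => hF i (qinit i), hF, rfl⟩
  · refine Or.inr ⟨u₁, w, hu₁, fun i => ?_, by simp⟩
    have h := hF i (qinit i)
    rwa [deltaStar_extStep_append_xL, deltaStar_extStep_map_inl] at h

variable [∀ i, DecidablePred (· ∈ Fi i)]

lemma phi_inr (b : Bool) (a : Alph σ) : phi δi qinit Fi (Sum.inr b) a = sA := rfl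

lemma phi_inl_of_ne (i : Fin n) (q : Qst i) {c : Alph σ} (hy : c ≠ yL) (hz : c ≠ zL) :
    phi δi qinit Fi (Sum.inl ⟨i, q⟩) c = Sum.inl ⟨i, extStep δi qinit i q c⟩ := by
  rcases c with a | k
  · rfl
  · fin_cases k
    · rfl
    · exact absurd rfl hy
    · exact absurd rfl hz

lemma mem_syn_phi_iff {w : List (Alph σ)} :
    w ∈ Syn (phi δi qinit Fi) ↔ ∀ p, deltaStar (phi δi qinit Fi) p w = sA :=
  mem_syn_iff_of_isSink _ (phi_inr δi qinit Fi false)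

lemma deltaStar_phi_inr_of_ne_nil {w : List (Alph σ)} (hw : w ≠ []) (b : Bool) :
    deltaStar (phi δi qinit Fi) (Sum.inr b) w = sA := by
  obtain ⟨a, w, rfl⟩ := List.exists_cons_of_ne_nil hw
  exact deltaStar_of_isSink _ (phi_inr δi qinit Fi false) w

lemma deltaStar_phi_of_noYZ (i : Fin n) {u : List (Alph σ)} (hu : noYZ u) (q : Qst i) :
    deltaStar (phi δi qinit Fi) (Sum.inl ⟨i, q⟩) u =
      Sum.inl ⟨i, deltaStar (extStep δi qinit i) q u⟩ := by
  induction u generalizing q with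
  | nil => rfl
  | cons c u ih =>
    obtain ⟨⟨hy, hz⟩, hu⟩ := noYZ_cons.1 hu
    rw [deltaStar_cons, phi_inl_of_ne δi qinit Fi i q hy hz, ih hu]
    rfl

lemma deltaStar_phi_append_yL (i : Fin n) {u : List (Alph σ)} (hu : noYZ u) (q : Qst i)
    (v : List (Alph σ)) : deltaStar (phi δi qinit Fi) (Sum.inl ⟨i, q⟩) (u ++ yL :: v) = sA := by
  rw [deltaStar_append, deltaStar_phi_of_noYZ δi qinit Fi i hu, deltaStar_cons]
  exact deltaStar_of_isSink _ (phi_inr δi qinit Fi false) v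

lemma deltaStar_phi_append_zL (i : Fin n) {u : List (Alph σ)} (hu : noYZ u) (q : Qst i) :
    deltaStar (phi δi qinit Fi) (Sum.inl ⟨i, q⟩) (u ++ [zL]) =
      if deltaStar (extStep δi qinit i) q u ∈ Fi i then sA else hA := by
  rw [deltaStar_append, deltaStar_phi_of_noYZ δi qinit Fi i hu]
  rfl

lemma not_mem_syn_phi_of_noYZ (hn : 0 < n) {w : List (Alph σ)} (hw : noYZ w) :
    w ∉ Syn (phi δi qinit Fi) := by
  rw [mem_syn_phi_iff]
  intro h
  have h₀ := h (Sum.inl ⟨⟨0, hn⟩, qinit _⟩)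
  rw [deltaStar_phi_of_noYZ δi qinit Fi _ hw] at h₀
  exact Sum.inl_ne_inr h₀

lemma append_zL_mem_syn_phi_iff {u : List (Alph σ)} (hu : noYZ u) :
    u ++ [zL] ∈ Syn (phi δi qinit Fi) ↔ ∀ i q, deltaStar (extStep δi qinit i) q u ∈ Fi i := by
  rw [mem_syn_phi_iff]
  constructor
  · intro h i q
    by_contra hq
    have h₀ := h (Sum.inl ⟨i, q⟩)
    rw [deltaStar_phi_append_zL δi qinit Fi i hu, if_neg hq] at h₀
    exact absurd h₀ (by simp [hA, sA])
  · rintro h (⟨i, q⟩ | b)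
    · rw [deltaStar_phi_append_zL δi qinit Fi i hu, if_pos (h i q)]
    · exact deltaStar_phi_inr_of_ne_nil δi qinit Fi (by simp) b

lemma L1_subset_syn_phi : L1 ⊆ Syn (phi δi qinit Fi) := by
  rintro _ ⟨u, v, hu, rfl⟩
  rw [mem_syn_phi_iff]
  rintro (⟨i, q⟩ | b)
  · exact deltaStar_phi_append_yL δi qinit Fi i hu q v
  · exact deltaStar_phi_inr_of_ne_nil δi qinit Fi (by simp) b

lemma L2_subset_syn_phi : L2 ⊆ Syn (phi δi qinit Fi) := by
  rintro _ ⟨u, v, hu, hv, rfl⟩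
  rw [mem_syn_phi_iff]
  rintro (⟨i, q⟩ | b)
  · rw [show u ++ zL :: v = u ++ [zL] ++ v by simp, deltaStar_append,
      deltaStar_phi_append_zL δi qinit Fi i hu]
    split_ifs
    · exact deltaStar_of_isSink _ (phi_inr δi qinit Fi false) v
    · exact deltaStar_phi_inr_of_ne_nil δi qinit Fi hv true
  · exact deltaStar_phi_inr_of_ne_nil δi qinit Fi (by simp) b

lemma I3Set_subset_syn_phi : I3Set δi qinit Fi ⊆ Syn (phi δi qinit Fi) := by
  rintro _ ⟨w, -, hF, rfl⟩
  rw [append_zL_mem_syn_phi_iff δi qinit Fi (noYZ_map_inl w)]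
  simpa only [deltaStar_extStep_map_inl] using hF

lemma I4Set_subset_syn_phi : I4Set δi qinit Fi ⊆ Syn (phi δi qinit Fi) := by
  rintro _ ⟨u, w, hu, hw, rfl⟩
  have hu' : noYZ (u ++ xL :: w.map Sum.inl) :=
    noYZ_append.2 ⟨hu, noYZ_cons.2 ⟨⟨nofun, nofun⟩, noYZ_map_inl w⟩⟩
  rw [show u ++ xL :: (w.map Sum.inl ++ [zL]) = u ++ xL :: w.map Sum.inl ++ [zL] by simp,
    append_zL_mem_syn_phi_iff δi qinit Fi hu']
  intro i q
  rw [deltaStar_extStep_append_xL, deltaStar_extStep_map_inl]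
  exact hw i

lemma syn_phi_subset (hn : 0 < n) :
    Syn (phi δi qinit Fi) ⊆ ISet ∪ I3Set δi qinit Fi ∪ I4Set δi qinit Fi := by
  intro w hw
  rcases noYZ_or_exists_eq_append_yL_or_zL w with hw' | ⟨u, c, v, hu, rfl | rfl, rfl⟩
  · exact absurd hw (not_mem_syn_phi_of_noYZ δi qinit Fi hn hw')
  · exact Or.inl (Or.inl (Or.inl ⟨u, v, hu, rfl⟩))
  · obtain rfl | hv := eq_or_ne v []
    · rw [Set.union_assoc]
      exact Or.inr (append_zL_mem_I3Set_union_I4Set δi qinit Fi hu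
        ((append_zL_mem_syn_phi_iff δi qinit Fi hu).1 hw))
    · exact Or.inl (Or.inl (Or.inr ⟨u, v, hu, hv, rfl⟩))

end Automaton

theorem syn_A_eq_I_union_I3_I4_general
    (n : ℕ) (hn : 0 < n) (σ : Type)
    (Qst : Fin n → Type)
    (δi : ∀ i, Qst i → σ → Qst i) (qinit : ∀ i, Qst i)
    (Fi : ∀ i, Set (Qst i)) [∀ i, DecidablePred (· ∈ Fi i)] :
    Syn (phi δi qinit Fi) =
      ISet ∪
      {w : List (Alph σ) | ∃ w' : List σ,
          (∀ i, w' ∈ LM δi qinit Fi i) ∧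
          (∀ i (q : Qst i), deltaStar (δi i) q w' ∈ Fi i) ∧
          w = w'.map Sum.inl ++ [zL]} ∪
      {w : List (Alph σ) | ∃ (u : List (Alph σ)) (w' : List σ),
          noYZ u ∧ (∀ i, w' ∈ LM δi qinit Fi i) ∧
          w = u ++ xL :: (w'.map Sum.inl ++ [zL])} :=
  (syn_phi_subset δi qinit Fi hn).antisymm <|
    Set.union_subset
      (Set.union_subset (Set.union_subset (L1_subset_syn_phi δi qinit Fi)
        (L2_subset_syn_phi δi qinit Fi)) (I3Set_subset_syn_phi δi qinit Fi))
      (I4Set_subset_syn_phi δi qinit Fi)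

/-- If ⋂ᵢ L[Mᵢ] ≠ ∅ then Syn(𝒜) = I ∪ I₃ ∪ I₄. -/
theorem syn_A_eq_I_union_I3_I4
    (n : ℕ) (hn : 0 < n) (σ : Type) [Fintype σ]
    (Qst : Fin n → Type) [∀ i, Fintype (Qst i)]
    (δi : ∀ i, Qst i → σ → Qst i) (qinit : ∀ i, Qst i)
    (Fi : ∀ i, Set (Qst i)) [∀ i, DecidablePred (· ∈ Fi i)]
    (hno : ∀ i (q : Qst i) (a : σ), δi i q a ≠ qinit i)
    (hqF : ∀ i, qinit i ∉ Fi i)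
    (hne : (⋂ i, LM δi qinit Fi i).Nonempty) :
    Syn (phi δi qinit Fi) =
      ISet ∪
      {w : List (Alph σ) | ∃ w' : List σ,
          (∀ i, w' ∈ LM δi qinit Fi i) ∧
          (∀ i (q : Qst i), deltaStar (δi i) q w' ∈ Fi i) ∧
          w = w'.map Sum.inl ++ [zL]} ∪
      {w : List (Alph σ) | ∃ (u : List (Alph σ)) (w' : List σ),
          noYZ u ∧ (∀ i, w' ∈ LM δi qinit Fi i) ∧
          w = u ++ xL :: (w'.map Sum.inl ++ [zL])} :=
  syn_A_eq_I_union_I3_I4_general n hn σ Qst δi qinit Fi
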